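/- With G, ξ as above and the set S = { (y₁,…,y_M) : y₁ ∈ ℤ, -L/2 + φ₁ ≤ y₁ < L/2 + φ₁, and y_m = ⌈φ_m/L - (y₁/L - ⌊y₁/L⌋)λ_m - 1/2⌉ - ⌊y₁/L⌋λ_m for m = 2,…,M }, every ℓ ∈ {0, 1, …, L-1} admits some y ∈ S with ∑_{m=1}^M [(C_m λ_m ℓ - C_m φ_m) mod* (C_m L)]² = ‖yG - ξ‖², where mod*(x; T) is the representative of x modulo T in [-T/2, T/2). -/
import Mathlib

open Matrix

/-- The symmetric modulus operation: the unique representative of `x` modulo `T`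
lying in `[-T/2, T/2)`. -/
noncomputable def smod (x T : ℝ) : ℝ := x - T * ⌊x / T + 1 / 2⌋

lemma smod_mul_left (c x T : ℝ) (hc : 0 < c) : smod (c * x) (c * T) = c * smod x T := by
  unfold smod
  rw [mul_div_mul_left _ _ (ne_of_gt hc)]
  ring

theorem stmt_14 (M L : ℕ) (hL : 0 < L) (C lam φ : Fin (M + 1) → ℝ)
    (hC : ∀ m, 0 < C m) (hlam0 : lam 0 = 1)
    (hlam : ∀ m, 0 ≤ lam m ∧ lam m < (L : ℝ))
    (G : Matrix (Fin (M + 1)) (Fin (M + 1)) ℝ)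
    (hG : G = fun p q => if p = 0 then C q * lam q else if p = q then C q * (L : ℝ) else 0)
    (ξ : Fin (M + 1) → ℝ) (hξ : ξ = fun m => C m * φ m)
    (S : Set (Fin (M + 1) → ℝ))
    (hS : S = {y | (∃ z : ℤ, y 0 = (z : ℝ)) ∧
      -(L : ℝ) / 2 + φ 0 ≤ y 0 ∧ y 0 < (L : ℝ) / 2 + φ 0 ∧
      ∀ m : Fin (M + 1), m ≠ 0 →
        y m = (⌈φ m / (L : ℝ) - (y 0 / (L : ℝ) - (⌊y 0 / (L : ℝ)⌋ : ℝ)) * lam m - 1 / 2⌉ : ℝ)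
          - (⌊y 0 / (L : ℝ)⌋ : ℝ) * lam m}) :
    ∀ ℓ : ℕ, ℓ < L → ∃ y ∈ S,
      ∑ m, (smod (C m * lam m * (ℓ : ℝ) - C m * φ m) (C m * (L : ℝ))) ^ 2 =
        ∑ m, (Matrix.vecMul y G m - ξ m) ^ 2 := by
  intro ℓ hℓ
  have hL0 : (0:ℝ) < L := by exact_mod_cast hL
  have hLne : (L:ℝ) ≠ 0 := ne_of_gt hL0
  set k : ℤ := ⌊((ℓ:ℝ) - φ 0) / (L:ℝ) + 1/2⌋ with hk
  set y : Fin (M+1) → ℝ := fun m => if m = 0 then (ℓ:ℝ) - (L:ℝ)*(k:ℝ) else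
    ((⌈φ m / (L:ℝ) - ((ℓ:ℝ)/(L:ℝ)) * lam m - 1/2⌉ : ℤ) : ℝ) + (k:ℝ) * lam m with hy
  have hy0 : y 0 = (ℓ:ℝ) - (L:ℝ)*(k:ℝ) := by simp [hy]
  have hym : ∀ m : Fin (M+1), m ≠ 0 →
      y m = ((⌈φ m / (L:ℝ) - ((ℓ:ℝ)/(L:ℝ)) * lam m - 1/2⌉ : ℤ) : ℝ) + (k:ℝ) * lam m := by
    intro m hm; simp [hy, hm]
  -- floor facts
  have hdiv : y 0 / (L:ℝ) = (ℓ:ℝ)/(L:ℝ) - (k:ℝ) := by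
    rw [hy0]; field_simp
  have hfl0 : ⌊(ℓ:ℝ)/(L:ℝ)⌋ = 0 := by
    rw [Int.floor_eq_zero_iff]
    constructor
    · positivity
    · rw [div_lt_one hL0]; exact_mod_cast hℓ
  have hfloor : ⌊y 0 / (L:ℝ)⌋ = -k := by
    rw [hdiv]
    rw [show (ℓ:ℝ)/(L:ℝ) - (k:ℝ) = (ℓ:ℝ)/(L:ℝ) + (-k : ℤ) by push_cast; ring]
    rw [Int.floor_add_intCast, hfl0]; ring
  have hfrac : y 0 / (L:ℝ) - (⌊y 0 / (L:ℝ)⌋ : ℝ) = (ℓ:ℝ)/(L:ℝ) := by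
    rw [hfloor, hdiv]; push_cast; ring
  -- bounds
  have hkle : (k:ℝ) ≤ ((ℓ:ℝ) - φ 0) / (L:ℝ) + 1/2 := Int.floor_le _
  have hklt : ((ℓ:ℝ) - φ 0) / (L:ℝ) + 1/2 < (k:ℝ) + 1 := Int.lt_floor_add_one _
  have hb1 : -(L:ℝ) / 2 + φ 0 ≤ y 0 := by
    rw [hy0]
    have : ((k:ℝ) - 1/2) * L ≤ (ℓ:ℝ) - φ 0 := by
      rw [← le_div_iff₀ hL0]; linarith
    nlinarith
  have hb2 : y 0 < (L:ℝ) / 2 + φ 0 := by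
    rw [hy0]
    have : (ℓ:ℝ) - φ 0 < ((k:ℝ) + 1/2) * L := by
      rw [← div_lt_iff₀ hL0]; linarith
    nlinarith
  refine ⟨y, ?_, ?_⟩
  · rw [hS]
    refine ⟨⟨(ℓ:ℤ) - L*k, by rw [hy0]; push_cast; ring⟩, hb1, hb2, ?_⟩
    intro m hm
    rw [hym m hm, hfrac, hfloor]
    push_cast; ring
  · apply Finset.sum_congr rfl
    intro m _
    subst hG hξ
    have hvm : Matrix.vecMul y (fun p q => if p = 0 then C q * lam q else
        if p = q then C q * (L : ℝ) else 0) m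
        = y 0 * (C m * lam m) + (if m = 0 then 0 else y m * (C m * (L:ℝ))) := by
      unfold Matrix.vecMul dotProduct
      by_cases hm : m = 0
      · subst hm
        simp only [if_pos]
        rw [Finset.sum_eq_single (0 : Fin (M+1))]
        · simp
        · intro p _ hp; simp [hp]
        · simp
      · rw [if_neg hm]
        have : ∀ p : Fin (M+1), y p * (if p = 0 then C m * lam m else
            if p = m then C m * (L:ℝ) else 0)
            = (if p = 0 then y 0 * (C m * lam m) else 0)
              + (if p = m then y m * (C m * (L:ℝ)) else 0) := by
          intro p
          by_cases h0 : p = 0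
          · subst h0; simp [Ne.symm hm]
          · by_cases h1 : p = m
            · subst h1; simp [h0]
            · simp [h0, h1]
        simp only [this, Finset.sum_add_distrib, Finset.sum_ite_eq', Finset.mem_univ, if_pos]
    rw [hvm]
    by_cases hm : m = 0
    · subst hm
      rw [if_pos rfl, hlam0, hy0]
      rw [show C 0 * 1 * (ℓ:ℝ) - C 0 * φ 0 = C 0 * ((ℓ:ℝ) - φ 0) by ring]
      rw [smod_mul_left _ _ _ (hC 0)]
      unfold smod
      rw [← hk]
      ring
    · rw [if_neg hm, hym m hm]
      rw [show C m * lam m * (ℓ:ℝ) - C m * φ m = C m * (lam m * (ℓ:ℝ) - φ m) by ring]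
      rw [smod_mul_left _ _ _ (hC m)]
      unfold smod
      have hceil : (⌈φ m / (L:ℝ) - ((ℓ:ℝ)/(L:ℝ)) * lam m - 1/2⌉ : ℤ)
          = -⌊(lam m * (ℓ:ℝ) - φ m) / (L:ℝ) + 1/2⌋ := by
        rw [← Int.ceil_neg]
        congr 1
        field_simp
        ring
      rw [hceil, hy0]
      push_cast
      ring
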